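/- arXiv:2504.06916 — 3 statements merged into one kernel-verified Lean document; each statement's English description precedes it below -/
import Mathlib

section
/- The invariant ring of G(m,e,2) acting on K[x,y] is a polynomial ring freely generated by (xy)^d and x^m + y^m, where m = de. -/
open MvPolynomial

noncomputable section

variable {K : Type*} [Field K]

/-- The diagonal matrix `D(a,b) = diag(ζ^a, ζ^b)` as an element of `GL₂(K)`. -/
def Dgl (ζ : K) (hζ0 : ζ ≠ 0) (a b : ℤ) : GL (Fin 2) K :=
  Matrix.GeneralLinearGroup.mkOfDetNeZero (Matrix.diagonal ![ζ ^ a, ζ ^ b]) (by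
    simp only [Matrix.det_diagonal, Fin.prod_univ_two]
    simp only [Matrix.cons_val_zero, Matrix.cons_val_one, Matrix.head_cons]
    exact mul_ne_zero (zpow_ne_zero _ hζ0) (zpow_ne_zero _ hζ0))

/-- The permutation matrix `τ` swapping the two coordinates, as an element of `GL₂(K)`. -/
def tauGL (K : Type*) [Field K] : GL (Fin 2) K :=
  Matrix.GeneralLinearGroup.mkOfDetNeZero !![(0 : K), 1; 1, 0] (by
    norm_num [Matrix.det_fin_two_of])

/-- The imprimitive reflection group `G(m,e,2) ≤ GL₂(K)`, generated by the diagonal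
matrices `D(a,b)` with `a + b ≡ 0 mod e` together with `τ`. -/
def Gme2 (ζ : K) (hζ0 : ζ ≠ 0) (e : ℕ) : Subgroup (GL (Fin 2) K) :=
  Subgroup.closure
    (insert (tauGL K) {A | ∃ a b : ℤ, (e : ℤ) ∣ a + b ∧ A = Dgl ζ hζ0 a b})

/-- `D(a,b)` with `e ∣ a + b`, as an element of `G(m,e,2)`. -/
def DG (ζ : K) (hζ0 : ζ ≠ 0) (e : ℕ) (a b : ℤ) (h : (e : ℤ) ∣ a + b) :
    ↥(Gme2 ζ hζ0 e) :=
  ⟨Dgl ζ hζ0 a b, Subgroup.subset_closure (Set.mem_insert_of_mem _ ⟨a, b, h, rfl⟩)⟩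

/-- `τ` as an element of `G(m,e,2)`. -/
def tauG (ζ : K) (hζ0 : ζ ≠ 0) (e : ℕ) : ↥(Gme2 ζ hζ0 e) :=
  ⟨tauGL K, Subgroup.subset_closure (Set.mem_insert _ _)⟩

end

/-- The subalgebra of polynomials invariant under a group acting by algebra
automorphisms. -/
def invariantSubalgebra {K : Type*} [CommSemiring K] {G : Type*} [Group G]
    (σ : G →* (MvPolynomial (Fin 2) K ≃ₐ[K] MvPolynomial (Fin 2) K)) :
    Subalgebra K (MvPolynomial (Fin 2) K) where
  carrier := {f | ∀ g : G, σ g f = f}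
  mul_mem' := by
    intro a b ha hb g
    rw [map_mul, ha g, hb g]
  add_mem' := by
    intro a b ha hb g
    rw [map_add, ha g, hb g]
  one_mem' := by intro g; rw [map_one]
  zero_mem' := by intro g; rw [map_zero]
  algebraMap_mem' := by intro c g; exact AlgEquiv.commutes _ _

/-! ### Auxiliary lemmas -/

noncomputable section AuxLemmas

open MvPolynomial

variable {K : Type*} [Field K]

lemma Dgl_inv (ζ : K) (hζ0 : ζ ≠ 0) (a b : ℤ) :
    (Dgl ζ hζ0 a b)⁻¹ = Dgl ζ hζ0 (-a) (-b) := by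
  rw [eq_comm, eq_inv_iff_mul_eq_one]
  refine Units.ext ?_
  show (Matrix.diagonal ![ζ ^ (-a), ζ ^ (-b)]) * (Matrix.diagonal ![ζ ^ a, ζ ^ b]) = 1
  rw [Matrix.diagonal_mul_diagonal]
  have h2 : (![ζ ^ (-a), ζ ^ (-b)] * ![ζ ^ a, ζ ^ b]) = 1 := by
    funext i
    fin_cases i <;> simp [inv_mul_cancel₀ (zpow_ne_zero _ hζ0)]
  show Matrix.diagonal (fun i => ![ζ ^ (-a), ζ ^ (-b)] i * ![ζ ^ a, ζ ^ b] i) = 1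
  rw [show (fun i => ![ζ ^ (-a), ζ ^ (-b)] i * ![ζ ^ a, ζ ^ b] i)
      = ![ζ ^ (-a), ζ ^ (-b)] * ![ζ ^ a, ζ ^ b] from rfl, h2]
  exact Matrix.diagonal_one

lemma tauGL_inv : (tauGL K)⁻¹ = tauGL K := by
  rw [eq_comm, eq_inv_iff_mul_eq_one]
  refine Units.ext ?_
  show !![(0:K),1;1,0] * !![(0:K),1;1,0] = 1
  rw [Matrix.mul_fin_two, Matrix.one_fin_two]
  norm_num

lemma fin2_finsupp (μ : Fin 2 →₀ ℕ) : μ = Finsupp.single 0 (μ 0) + Finsupp.single 1 (μ 1) := by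
  ext i
  fin_cases i <;> simp

lemma monomial_eq_mul (μ : Fin 2 →₀ ℕ) (c : K) :
    monomial μ c = C c * X 0 ^ (μ 0) * X 1 ^ (μ 1) := by
  rw [X_pow_eq_monomial, X_pow_eq_monomial, C_apply, monomial_mul, monomial_mul,
    mul_one, mul_one, zero_add, ← fin2_finsupp]

lemma mono_pair (p q : ℕ) (c : K) :
    C c * (X 0 : MvPolynomial (Fin 2) K) ^ p * X 1 ^ q
      = monomial (Finsupp.single 0 p + Finsupp.single 1 q) c := by
  rw [monomial_eq_mul]
  simp

lemma pair_finsupp_eq_iff (p q p' q' : ℕ) :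
    (Finsupp.single (0 : Fin 2) p + Finsupp.single 1 q
      = Finsupp.single 0 p' + Finsupp.single 1 q') ↔ (p = p' ∧ q = q') := by
  constructor
  · intro h
    constructor
    · have := DFunLike.congr_fun h (0 : Fin 2)
      simpa using this
    · have := DFunLike.congr_fun h (1 : Fin 2)
      simpa using this
  · rintro ⟨rfl, rfl⟩; rfl

/-- Coefficientwise formula for a "diagonal scaling" substitution. -/
lemma coeff_aeval_scale (c : Fin 2 → K) (f : MvPolynomial (Fin 2) K) (μ : Fin 2 →₀ ℕ) :
    coeff μ (aeval (fun i => C (c i) * X i) f) = c 0 ^ (μ 0) * c 1 ^ (μ 1) * coeff μ f := by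
  have key : ∀ ν : Fin 2 →₀ ℕ, ∀ t : K, aeval (fun i => C (c i) * X i) (monomial ν t)
      = monomial ν (c 0 ^ (ν 0) * c 1 ^ (ν 1) * t) := by
    intro ν t
    rw [aeval_monomial, Finsupp.prod_fintype _ _ (fun i => pow_zero _), Fin.prod_univ_two,
      monomial_eq_mul, mul_pow, mul_pow, ← C_pow, ← C_pow, algebraMap_eq]
    rw [C_mul, C_mul]
    ring
  conv_lhs => rw [← support_sum_monomial_coeff f]
  rw [map_sum, coeff_sum]
  have h2 : ∀ ν ∈ f.support, coeff μ (aeval (fun i => C (c i) * X i) (monomial ν (coeff ν f)))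
      = if ν = μ then c 0 ^ (ν 0) * c 1 ^ (ν 1) * coeff ν f else 0 := by
    intro ν _
    rw [key, coeff_monomial]
  rw [Finset.sum_congr rfl h2, Finset.sum_ite_eq' f.support μ]
  by_cases hμ : μ ∈ f.support
  · rw [if_pos hμ]
  · rw [if_neg hμ, notMem_support_iff.mp hμ, mul_zero]

lemma algEquiv_eq_of_X {E : MvPolynomial (Fin 2) K ≃ₐ[K] MvPolynomial (Fin 2) K}
    {g : Fin 2 → MvPolynomial (Fin 2) K}
    (hE : ∀ i, E (X i) = g i) (f : MvPolynomial (Fin 2) K) :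
    E f = aeval g f := by
  have h : (E : MvPolynomial (Fin 2) K →ₐ[K] MvPolynomial (Fin 2) K) = aeval g := by
    apply algHom_ext
    intro i
    simpa using hE i
  exact congrFun (congrArg DFunLike.coe h) f

lemma xy_pow_mem (m d : ℕ) (j : ℕ) (hj : d ∣ j) :
    ((X 0 * X 1 : MvPolynomial (Fin 2) K)) ^ j ∈
      Algebra.adjoin K {((X 0 * X 1 : MvPolynomial (Fin 2) K)) ^ d,
        (X 0 : MvPolynomial (Fin 2) K) ^ m + (X 1 : MvPolynomial (Fin 2) K) ^ m} := by
  obtain ⟨s, rfl⟩ := hj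
  rw [pow_mul]
  exact pow_mem (Algebra.subset_adjoin (Set.mem_insert _ _)) s

lemma power_sum_mem (m d e : ℕ) (hm : m = d * e) (t : ℕ) :
    (X 0 : MvPolynomial (Fin 2) K) ^ (m * t) + (X 1 : MvPolynomial (Fin 2) K) ^ (m * t) ∈
      Algebra.adjoin K {((X 0 * X 1 : MvPolynomial (Fin 2) K)) ^ d,
        (X 0 : MvPolynomial (Fin 2) K) ^ m + (X 1 : MvPolynomial (Fin 2) K) ^ m} := by
  set A := Algebra.adjoin K {((X 0 * X 1 : MvPolynomial (Fin 2) K)) ^ d,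
        (X 0 : MvPolynomial (Fin 2) K) ^ m + (X 1 : MvPolynomial (Fin 2) K) ^ m} with hA
  have hxy : ((X 0 * X 1 : MvPolynomial (Fin 2) K)) ^ m ∈ A := xy_pow_mem m d m ⟨e, hm⟩
  have hv : (X 0 : MvPolynomial (Fin 2) K) ^ m + (X 1 : MvPolynomial (Fin 2) K) ^ m ∈ A :=
    Algebra.subset_adjoin (Set.mem_insert_of_mem _ rfl)
  have key : ∀ t : ℕ,
      ((X 0 : MvPolynomial (Fin 2) K) ^ (m * t) + (X 1 : MvPolynomial (Fin 2) K) ^ (m * t) ∈ A) ∧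
      ((X 0 : MvPolynomial (Fin 2) K) ^ (m * (t+1))
        + (X 1 : MvPolynomial (Fin 2) K) ^ (m * (t+1)) ∈ A) := by
    intro t
    induction t with
    | zero =>
      constructor
      · rw [Nat.mul_zero, pow_zero, pow_zero]
        exact Subalgebra.add_mem _ (Subalgebra.one_mem _) (Subalgebra.one_mem _)
      · rw [Nat.mul_one]; exact hv
    | succ n ih =>
      refine ⟨ih.2, ?_⟩
      have hid : (X 0 : MvPolynomial (Fin 2) K) ^ (m * (n+2))
            + (X 1 : MvPolynomial (Fin 2) K) ^ (m * (n+2))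
          = ((X 0 : MvPolynomial (Fin 2) K) ^ (m * (n+1))
              + (X 1 : MvPolynomial (Fin 2) K) ^ (m * (n+1)))
            * ((X 0 : MvPolynomial (Fin 2) K) ^ m + (X 1 : MvPolynomial (Fin 2) K) ^ m)
          - ((X 0 * X 1 : MvPolynomial (Fin 2) K)) ^ m
            * ((X 0 : MvPolynomial (Fin 2) K) ^ (m * n)
              + (X 1 : MvPolynomial (Fin 2) K) ^ (m * n)) := by
        have e1 : m * (n+2) = m * n + m + m := by ring
        have e2 : m * (n+1) = m * n + m := by ring
        rw [e1, e2]
        ring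
      rw [hid]
      exact Subalgebra.sub_mem _ (Subalgebra.mul_mem _ ih.2 hv) (Subalgebra.mul_mem _ hxy ih.1)
  exact (key t).1

lemma pair_mem (m d e : ℕ) (hm : m = d * e) (i j : ℕ) (hji : j ≤ i) (hdj : d ∣ j)
    (hmij : (m:ℤ) ∣ (i:ℤ) - (j:ℤ)) :
    (X 0 : MvPolynomial (Fin 2) K) ^ i * (X 1 : MvPolynomial (Fin 2) K) ^ j
      + (X 0 : MvPolynomial (Fin 2) K) ^ j * (X 1 : MvPolynomial (Fin 2) K) ^ i ∈
      Algebra.adjoin K {((X 0 * X 1 : MvPolynomial (Fin 2) K)) ^ d,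
        (X 0 : MvPolynomial (Fin 2) K) ^ m + (X 1 : MvPolynomial (Fin 2) K) ^ m} := by
  obtain ⟨t, ht⟩ : ∃ t : ℕ, i = j + m * t := by
    obtain ⟨c, hc⟩ := hmij
    rcases Nat.eq_zero_or_pos m with hm0 | hm0
    · refine ⟨0, ?_⟩
      rw [hm0] at hc
      omega
    · have h1 : 0 ≤ (m:ℤ) * c := by rw [← hc]; omega
      have hc0 : 0 ≤ c := by
        nlinarith [h1, (show (0:ℤ) < m by exact_mod_cast hm0)]
      refine ⟨c.toNat, ?_⟩
      zify
      rw [Int.toNat_of_nonneg hc0]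
      linarith [hc]
  subst ht
  have hid : (X 0 : MvPolynomial (Fin 2) K) ^ (j + m * t) * (X 1 : MvPolynomial (Fin 2) K) ^ j
      + (X 0 : MvPolynomial (Fin 2) K) ^ j * (X 1 : MvPolynomial (Fin 2) K) ^ (j + m * t)
      = ((X 0 * X 1 : MvPolynomial (Fin 2) K)) ^ j
        * ((X 0 : MvPolynomial (Fin 2) K) ^ (m * t) + (X 1 : MvPolynomial (Fin 2) K) ^ (m * t)) := by
    ring
  rw [hid]
  exact Subalgebra.mul_mem _ (xy_pow_mem m d j hdj) (power_sum_mem m d e hm t)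

lemma coeff_uv (m d : ℕ) (hd : 0 < d) (hm0 : 0 < m) (i j a b : ℕ) (hb : b ≤ j) :
    coeff (Finsupp.single 0 (d*i + m*j) + Finsupp.single 1 (d*i))
      ((((X 0 * X 1 : MvPolynomial (Fin 2) K)) ^ d) ^ a
        * ((X 0 : MvPolynomial (Fin 2) K) ^ m + (X 1 : MvPolynomial (Fin 2) K) ^ m) ^ b)
    = if a = i ∧ b = j then 1 else 0 := by
  have hu : (((X 0 * X 1 : MvPolynomial (Fin 2) K)) ^ d) ^ a
      = X 0 ^ (d*a) * X 1 ^ (d*a) := by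
    rw [← pow_mul, mul_pow]
  rw [hu, add_pow, Finset.mul_sum]
  have hterm : ∀ k, (X 0 : MvPolynomial (Fin 2) K) ^ (d*a) * X 1 ^ (d*a) *
      (((X 0 : MvPolynomial (Fin 2) K) ^ m) ^ k * ((X 1 : MvPolynomial (Fin 2) K) ^ m) ^ (b-k)
        * (b.choose k : MvPolynomial (Fin 2) K))
      = monomial (Finsupp.single 0 (d*a + m*k) + Finsupp.single 1 (d*a + m*(b-k)))
          ((b.choose k : K)) := by
    intro k
    rw [← mono_pair, ← C_eq_coe_nat, pow_add, pow_add, pow_mul, pow_mul]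
    ring
  rw [Finset.sum_congr rfl (fun k _ => hterm k), coeff_sum]
  simp only [coeff_monomial]
  by_cases hij : a = i ∧ b = j
  · obtain ⟨rfl, rfl⟩ := hij
    rw [if_pos ⟨rfl, rfl⟩]
    rw [Finset.sum_eq_single b]
    · rw [if_pos (by rw [pair_finsupp_eq_iff]; simp), Nat.choose_self, Nat.cast_one]
    · intro k hk hkb
      rw [if_neg]
      rw [pair_finsupp_eq_iff]
      rintro ⟨h1, h2⟩
      simp only [Finset.mem_range] at hk
      have : m * k = m * b := by omega
      exact hkb (Nat.eq_of_mul_eq_mul_left hm0 this)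
    · intro hb'
      simp only [Finset.mem_range] at hb'
      omega
  · rw [if_neg hij]
    apply Finset.sum_eq_zero
    intro k hk
    rw [if_neg]
    rw [pair_finsupp_eq_iff]
    rintro ⟨h1, h2⟩
    simp only [Finset.mem_range] at hk
    have hkb : k ≤ b := by omega
    have hda_le : d*a ≤ d*i := by omega
    have hsum : 2*(d*a) + m*b = 2*(d*i) + m*j := by
      have : m*k + m*(b-k) = m*b := by
        rw [← Nat.mul_add]
        congr 1
        omega
      omega
    have hmb_le : m*b ≤ m*j := Nat.mul_le_mul_left m hb
    have h3 : d*a = d*i := by omega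
    have h4 : m*b = m*j := by omega
    exact hij ⟨Nat.eq_of_mul_eq_mul_left hd h3, Nat.eq_of_mul_eq_mul_left hm0 h4⟩

lemma alg_indep_aux (m d : ℕ) (hd : 0 < d) (hm0 : 0 < m) :
    AlgebraicIndependent K
      ![((X 0 * X 1 : MvPolynomial (Fin 2) K)) ^ d,
        (X 0 : MvPolynomial (Fin 2) K) ^ m + (X 1 : MvPolynomial (Fin 2) K) ^ m] := by
  rw [algebraicIndependent_iff]
  intro p hp
  by_contra hp0
  obtain ⟨μs, hμs, hmax⟩ := Finset.exists_max_image p.support (fun μ => μ 1)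
    (support_nonempty.mpr hp0)
  set i := μs 0
  set j := μs 1
  set ν : Fin 2 →₀ ℕ := Finsupp.single 0 (d*i + m*j) + Finsupp.single 1 (d*i) with hν
  have hco : coeff ν (aeval
      ![((X 0 * X 1 : MvPolynomial (Fin 2) K)) ^ d,
        (X 0 : MvPolynomial (Fin 2) K) ^ m + (X 1 : MvPolynomial (Fin 2) K) ^ m] p)
      = coeff μs p := by
    conv_lhs => rw [← support_sum_monomial_coeff p]
    rw [map_sum, coeff_sum]
    have hterm : ∀ μ ∈ p.support, coeff ν (aeval
        ![((X 0 * X 1 : MvPolynomial (Fin 2) K)) ^ d,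
          (X 0 : MvPolynomial (Fin 2) K) ^ m + (X 1 : MvPolynomial (Fin 2) K) ^ m]
        (monomial μ (coeff μ p)))
        = if μ = μs then coeff μ p else 0 := by
      intro μ hμ
      rw [aeval_monomial, Finsupp.prod_fintype _ _ (fun i => pow_zero _), Fin.prod_univ_two]
      simp only [Matrix.cons_val_zero, Matrix.cons_val_one, Matrix.head_cons]
      rw [algebraMap_eq, coeff_C_mul, coeff_uv m d hd hm0 i j (μ 0) (μ 1) (hmax μ hμ)]
      by_cases hμμ : μ = μs
      · subst hμμ
        rw [if_pos ⟨rfl, rfl⟩, if_pos rfl, mul_one]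
      · rw [if_neg, if_neg hμμ, mul_zero]
        rintro ⟨h0, h1⟩
        exact hμμ (by rw [fin2_finsupp μ, fin2_finsupp μs, h0, h1])
    rw [Finset.sum_congr rfl hterm, Finset.sum_ite_eq' p.support μs, if_pos hμs]
  rw [hp, coeff_zero] at hco
  exact (mem_support_iff.mp hμs) hco.symm

end AuxLemmas

noncomputable section MainAux

open MvPolynomial

variable {K : Type*} [Field K]

lemma sigma_D_X (e : ℕ) (ζ : K) (hζ0 : ζ ≠ 0)
    (σ : ↥(Gme2 ζ hζ0 e) →* (MvPolynomial (Fin 2) K ≃ₐ[K] MvPolynomial (Fin 2) K))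
    (hσ : ∀ (g : ↥(Gme2 ζ hζ0 e)) (i : Fin 2),
      σ g (X i) = ∑ j : Fin 2,
        C ((((g⁻¹ : ↥(Gme2 ζ hζ0 e)) : GL (Fin 2) K) : Matrix (Fin 2) (Fin 2) K) i j) *
          X j)
    (a b : ℤ) (hab : (e:ℤ) ∣ a + b) (i : Fin 2) :
    σ (DG ζ hζ0 e a b hab) (X i) = C (![ζ ^ (-a), ζ ^ (-b)] i) * X i := by
  have hinv : ((((DG ζ hζ0 e a b hab)⁻¹ : ↥(Gme2 ζ hζ0 e)) : GL (Fin 2) K) :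
      Matrix (Fin 2) (Fin 2) K) = Matrix.diagonal ![ζ ^ (-a), ζ ^ (-b)] := by
    have h1 : (((DG ζ hζ0 e a b hab)⁻¹ : ↥(Gme2 ζ hζ0 e)) : GL (Fin 2) K)
        = (Dgl ζ hζ0 a b)⁻¹ := rfl
    rw [h1, Dgl_inv]
    rfl
  rw [hσ, hinv, Fin.sum_univ_two]
  fin_cases i <;> simp [Matrix.diagonal_apply]

lemma sigma_tau_X (e : ℕ) (ζ : K) (hζ0 : ζ ≠ 0)
    (σ : ↥(Gme2 ζ hζ0 e) →* (MvPolynomial (Fin 2) K ≃ₐ[K] MvPolynomial (Fin 2) K))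
    (hσ : ∀ (g : ↥(Gme2 ζ hζ0 e)) (i : Fin 2),
      σ g (X i) = ∑ j : Fin 2,
        C ((((g⁻¹ : ↥(Gme2 ζ hζ0 e)) : GL (Fin 2) K) : Matrix (Fin 2) (Fin 2) K) i j) *
          X j)
    (i : Fin 2) :
    σ (tauG ζ hζ0 e) (X i) = X (Equiv.swap (0 : Fin 2) 1 i) := by
  have hinv : ((((tauG ζ hζ0 e)⁻¹ : ↥(Gme2 ζ hζ0 e)) : GL (Fin 2) K) :
      Matrix (Fin 2) (Fin 2) K) = !![(0:K),1;1,0] := by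
    have h1 : (((tauG ζ hζ0 e)⁻¹ : ↥(Gme2 ζ hζ0 e)) : GL (Fin 2) K) = (tauGL K)⁻¹ := rfl
    rw [h1, tauGL_inv]
    rfl
  rw [hσ, hinv, Fin.sum_univ_two]
  fin_cases i <;> simp [Matrix.cons_val_zero, Matrix.cons_val_one]

end MainAux

/-!
STATEMENT 8: the invariant ring of `G(m,e,2)` acting on `K[x,y]` is the polynomial ring
freely generated by `(xy)^d` and `x^m + y^m`.  Here `σ` is the action of
`G(m,e,2) ≤ GL₂(K)` on `K[x,y]` by linear substitutions.
-/
theorem invariant_ring_Gme2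
    {K : Type*} [Field K] (m d e : ℕ) (hd : 0 < d) (he : 0 < e)
    (hm : m = d * e)
    (ζ : K) (hζ : IsPrimitiveRoot ζ m) (hζ0 : ζ ≠ 0)
    (σ : ↥(Gme2 ζ hζ0 e) →* (MvPolynomial (Fin 2) K ≃ₐ[K] MvPolynomial (Fin 2) K))
    (hσ : ∀ (g : ↥(Gme2 ζ hζ0 e)) (i : Fin 2),
      σ g (X i) = ∑ j : Fin 2,
        C ((((g⁻¹ : ↥(Gme2 ζ hζ0 e)) : GL (Fin 2) K) : Matrix (Fin 2) (Fin 2) K) i j) *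
          X j) :
    invariantSubalgebra σ =
      Algebra.adjoin K {((X 0 * X 1 : MvPolynomial (Fin 2) K)) ^ d,
        (X 0 : MvPolynomial (Fin 2) K) ^ m + (X 1 : MvPolynomial (Fin 2) K) ^ m} ∧
    AlgebraicIndependent K
      ![((X 0 * X 1 : MvPolynomial (Fin 2) K)) ^ d,
        (X 0 : MvPolynomial (Fin 2) K) ^ m + (X 1 : MvPolynomial (Fin 2) K) ^ m] := by
  classical
  have hm0 : 0 < m := hm ▸ Nat.mul_pos hd he
  -- the two basic descriptions of the action of the generators
  have hσD : ∀ (a b : ℤ) (hab : (e:ℤ) ∣ a + b) (f : MvPolynomial (Fin 2) K),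
      σ (DG ζ hζ0 e a b hab) f
        = aeval (fun i => C (![ζ ^ (-a), ζ ^ (-b)] i) * X i) f := by
    intro a b hab f
    exact algEquiv_eq_of_X (fun i => sigma_D_X e ζ hζ0 σ hσ a b hab i) f
  have hστ : ∀ f : MvPolynomial (Fin 2) K,
      σ (tauG ζ hζ0 e) f = rename (Equiv.swap (0 : Fin 2) 1) f := by
    intro f
    have h1 : σ (tauG ζ hζ0 e) f = aeval (fun i => X (Equiv.swap (0:Fin 2) 1 i)) f :=
      algEquiv_eq_of_X (fun i => sigma_tau_X e ζ hζ0 σ hσ i) f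
    rw [h1]
    have h2 : (aeval (fun i => X (Equiv.swap (0:Fin 2) 1 i)) :
        MvPolynomial (Fin 2) K →ₐ[K] MvPolynomial (Fin 2) K)
        = (rename (Equiv.swap (0:Fin 2) 1) :
            MvPolynomial (Fin 2) K →ₐ[K] MvPolynomial (Fin 2) K) := by
      apply algHom_ext
      intro i
      simp
    exact congrFun (congrArg DFunLike.coe h2) f
  -- invariance can be checked on generators
  have hinv_gen : ∀ f : MvPolynomial (Fin 2) K,
      (σ (tauG ζ hζ0 e) f = f) →
      (∀ a b (hab : (e:ℤ) ∣ a + b), σ (DG ζ hζ0 e a b hab) f = f) →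
      ∀ g : ↥(Gme2 ζ hζ0 e), σ g f = f := by
    intro f hτ hD g
    have hmem : (g : GL (Fin 2) K) ∈ Subgroup.closure
        (insert (tauGL K) {A | ∃ a b : ℤ, (e : ℤ) ∣ a + b ∧ A = Dgl ζ hζ0 a b}) := g.2
    refine Subgroup.closure_induction
      (p := fun x hx => σ ⟨x, hx⟩ f = f) ?_ ?_ ?_ ?_ hmem
    · intro x hx
      rcases hx with rfl | ⟨a, b, hab, rfl⟩
      · exact hτ
      · exact hD a b hab
    · show σ 1 f = f
      rw [map_one]
      rfl
    · intro x y hx hy px py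
      show σ ((⟨x, hx⟩ : ↥(Gme2 ζ hζ0 e)) * ⟨y, hy⟩) f = f
      rw [map_mul, AlgEquiv.mul_apply, py, px]
    · intro x hx px
      show σ ((⟨x, hx⟩ : ↥(Gme2 ζ hζ0 e))⁻¹) f = f
      rw [map_inv]
      show (σ (⟨x, hx⟩ : ↥(Gme2 ζ hζ0 e))).symm f = f
      exact ((σ (⟨x, hx⟩ : ↥(Gme2 ζ hζ0 e))).symm_apply_eq).mpr px.symm
  -- a power of ζ with exponent divisible by m is 1
  have hζpow : ∀ z : ℤ, (m:ℤ) ∣ z → ζ ^ z = 1 := fun z hz => (hζ.zpow_eq_one_iff_dvd z).mpr hz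
  constructor
  · -- the invariant ring is the adjoin
    apply le_antisymm
    · -- invariant ⊆ adjoin
      intro f hf
      have hf' : ∀ g : ↥(Gme2 ζ hζ0 e), σ g f = f := hf
      -- divisibility conditions from the diagonal part
      have hdvd : ∀ μ ∈ f.support, ∀ a b : ℤ, (e:ℤ) ∣ a + b →
          (m:ℤ) ∣ (a * (μ 0 : ℤ) + b * (μ 1 : ℤ)) := by
        intro μ hμ a b hab
        have h1 := hf' (DG ζ hζ0 e a b hab)
        rw [hσD a b hab f] at h1
        have h2 := congrArg (coeff μ) h1
        rw [coeff_aeval_scale] at h2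
        simp only [Matrix.cons_val_zero, Matrix.cons_val_one, Matrix.head_cons] at h2
        have hc0 : coeff μ f ≠ 0 := mem_support_iff.mp hμ
        have h3 : (ζ ^ (-a)) ^ (μ 0) * (ζ ^ (-b)) ^ (μ 1) = 1 := by
          have h4 : (ζ ^ (-a)) ^ (μ 0) * (ζ ^ (-b)) ^ (μ 1) * coeff μ f
              = 1 * coeff μ f := by
            rw [one_mul]; exact h2
          exact mul_right_cancel₀ hc0 h4
        have e0 : (ζ ^ (-a)) ^ (μ 0) = ζ ^ ((-a) * (μ 0 : ℤ)) := by
          rw [← zpow_natCast (ζ ^ (-a)) (μ 0), ← zpow_mul]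
        have e1 : (ζ ^ (-b)) ^ (μ 1) = ζ ^ ((-b) * (μ 1 : ℤ)) := by
          rw [← zpow_natCast (ζ ^ (-b)) (μ 1), ← zpow_mul]
        rw [e0, e1, ← zpow_add₀ hζ0] at h3
        have h5 := (hζ.zpow_eq_one_iff_dvd _).mp h3
        have h6 : (-a) * (μ 0 : ℤ) + (-b) * (μ 1 : ℤ)
            = -(a * (μ 0 : ℤ) + b * (μ 1 : ℤ)) := by ring
        rw [h6, dvd_neg] at h5
        exact h5
      have hd0 : ∀ μ ∈ f.support, d ∣ μ 0 := by
        intro μ hμ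
        have h1 := hdvd μ hμ e 0 (by simp)
        rw [zero_mul, add_zero] at h1
        obtain ⟨c, hc⟩ := h1
        rw [hm] at hc
        push_cast at hc
        have h2 : (e:ℤ) * (μ 0 : ℤ) = (e:ℤ) * ((d:ℤ) * c) := by rw [hc]; ring
        have h3 : (μ 0 : ℤ) = (d:ℤ) * c :=
          mul_left_cancel₀ (by exact_mod_cast he.ne') h2
        have h4 : (d:ℤ) ∣ (μ 0 : ℤ) := ⟨c, h3⟩
        exact_mod_cast h4
      have hd1 : ∀ μ ∈ f.support, d ∣ μ 1 := by
        intro μ hμ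
        have h1 := hdvd μ hμ 0 e (by simp)
        rw [zero_mul, zero_add] at h1
        obtain ⟨c, hc⟩ := h1
        rw [hm] at hc
        push_cast at hc
        have h2 : (e:ℤ) * (μ 1 : ℤ) = (e:ℤ) * ((d:ℤ) * c) := by rw [hc]; ring
        have h3 : (μ 1 : ℤ) = (d:ℤ) * c :=
          mul_left_cancel₀ (by exact_mod_cast he.ne') h2
        have h4 : (d:ℤ) ∣ (μ 1 : ℤ) := ⟨c, h3⟩
        exact_mod_cast h4
      have hm01 : ∀ μ ∈ f.support, (m:ℤ) ∣ (μ 0 : ℤ) - (μ 1 : ℤ) := by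
        intro μ hμ
        have h1 := hdvd μ hμ 1 (-1) (by simp)
        rw [one_mul, neg_one_mul] at h1
        exact h1
      -- swap symmetry of the coefficients
      have hτf : rename (Equiv.swap (0:Fin 2) 1) f = f := by
        rw [← hστ f]; exact hf' (tauG ζ hζ0 e)
      set sw : (Fin 2 →₀ ℕ) → (Fin 2 →₀ ℕ) :=
        Finsupp.mapDomain (Equiv.swap (0:Fin 2) 1) with hsw
      have hswc : ∀ μ, coeff (sw μ) f = coeff μ f := by
        intro μ
        conv_lhs => rw [← hτf]
        exact coeff_rename_mapDomain _ (Equiv.injective _) f μ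
      have hsw0 : ∀ μ, sw μ 0 = μ 1 := by
        intro μ
        have h1 : (0 : Fin 2) = (Equiv.swap (0:Fin 2) 1) 1 := by simp
        rw [h1]
        exact Finsupp.mapDomain_apply (Equiv.injective _) μ 1
      have hsw1 : ∀ μ, sw μ 1 = μ 0 := by
        intro μ
        have h1 : (1 : Fin 2) = (Equiv.swap (0:Fin 2) 1) 0 := by simp
        rw [h1]
        exact Finsupp.mapDomain_apply (Equiv.injective _) μ 0
      have hswsw : ∀ μ, sw (sw μ) = μ := by
        intro μ
        rw [hsw, ← Finsupp.mapDomain_comp]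
        have h1 : (⇑(Equiv.swap (0:Fin 2) 1) ∘ ⇑(Equiv.swap (0:Fin 2) 1)) = id := by
          funext x
          simp [Equiv.swap_apply_self]
        rw [h1, Finsupp.mapDomain_id]
      have hswS : ∀ μ, μ ∈ f.support → sw μ ∈ f.support := by
        intro μ hμ
        rw [mem_support_iff, hswc]
        exact mem_support_iff.mp hμ
      -- write f as a sum of monomials and split
      rw [show f = ∑ μ ∈ f.support, monomial μ (coeff μ f)
        from (support_sum_monomial_coeff f).symm]
      rw [← Finset.sum_filter_add_sum_filter_not f.support (fun μ => μ 0 = μ 1)]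
      refine Subalgebra.add_mem _ ?_ ?_
      · refine Subalgebra.sum_mem _ ?_
        intro μ hμ
        simp only [Finset.mem_filter] at hμ
        obtain ⟨hμS, hμeq⟩ := hμ
        rw [monomial_eq_mul, ← hμeq, mul_assoc, ← mul_pow]
        refine Subalgebra.mul_mem _ ?_ (xy_pow_mem m d (μ 0) (hd0 μ hμS))
        have := Subalgebra.algebraMap_mem (Algebra.adjoin K
          {((X 0 * X 1 : MvPolynomial (Fin 2) K)) ^ d,
            (X 0 : MvPolynomial (Fin 2) K) ^ m + (X 1 : MvPolynomial (Fin 2) K) ^ m})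
          (coeff μ f)
        rwa [algebraMap_eq] at this
      · have hLT : ∑ μ ∈ (f.support.filter (fun μ => ¬ μ 0 = μ 1)).filter
              (fun μ => ¬ μ 1 < μ 0), monomial μ (coeff μ f)
            = ∑ μ ∈ (f.support.filter (fun μ => ¬ μ 0 = μ 1)).filter
              (fun μ => μ 1 < μ 0), monomial (sw μ) (coeff μ f) := by
          refine Finset.sum_nbij' sw sw ?_ ?_ ?_ ?_ ?_
          · intro μ hμ
            simp only [Finset.mem_filter] at hμ ⊢
            obtain ⟨⟨hμS, hne⟩, hnlt⟩ := hμ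
            refine ⟨⟨hswS μ hμS, ?_⟩, ?_⟩
            · rw [hsw0, hsw1]; omega
            · rw [hsw0, hsw1]; omega
          · intro μ hμ
            simp only [Finset.mem_filter] at hμ ⊢
            obtain ⟨⟨hμS, hne⟩, hlt⟩ := hμ
            refine ⟨⟨hswS μ hμS, ?_⟩, ?_⟩
            · rw [hsw0, hsw1]; omega
            · rw [hsw0, hsw1]; omega
          · intro μ _; exact hswsw μ
          · intro μ _; exact hswsw μ
          · intro μ hμ
            rw [hswsw, hswc]
        rw [← Finset.sum_filter_add_sum_filter_not
          (f.support.filter (fun μ => ¬ μ 0 = μ 1)) (fun μ => μ 1 < μ 0), hLT,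
          ← Finset.sum_add_distrib]
        refine Subalgebra.sum_mem _ ?_
        intro μ hμ
        simp only [Finset.mem_filter] at hμ
        obtain ⟨⟨hμS, hne⟩, hlt⟩ := hμ
        rw [monomial_eq_mul, monomial_eq_mul, hsw0, hsw1]
        have hfac : C (coeff μ f) * X 0 ^ (μ 0) * X 1 ^ (μ 1)
              + C (coeff μ f) * X 0 ^ (μ 1) * X 1 ^ (μ 0)
            = C (coeff μ f) * ((X 0 : MvPolynomial (Fin 2) K) ^ (μ 0) * X 1 ^ (μ 1)
              + X 0 ^ (μ 1) * X 1 ^ (μ 0)) := by ring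
        rw [hfac]
        refine Subalgebra.mul_mem _ ?_
          (pair_mem m d e hm (μ 0) (μ 1) (le_of_lt hlt) (hd1 μ hμS) (hm01 μ hμS))
        have := Subalgebra.algebraMap_mem (Algebra.adjoin K
          {((X 0 * X 1 : MvPolynomial (Fin 2) K)) ^ d,
            (X 0 : MvPolynomial (Fin 2) K) ^ m + (X 1 : MvPolynomial (Fin 2) K) ^ m})
          (coeff μ f)
        rwa [algebraMap_eq] at this
    · -- adjoin ⊆ invariant
      rw [Algebra.adjoin_le_iff]
      intro w hw
      simp only [Set.mem_insert_iff, Set.mem_singleton_iff] at hw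
      have hmemiff : ∀ p : MvPolynomial (Fin 2) K,
          (∀ g : ↥(Gme2 ζ hζ0 e), σ g p = p) → p ∈ invariantSubalgebra σ := fun p hp => hp
      rcases hw with rfl | rfl
      · refine hmemiff _ (hinv_gen _ ?_ ?_)
        · rw [hστ, map_pow, map_mul, rename_X, rename_X]
          simp only [Equiv.swap_apply_left, Equiv.swap_apply_right]
          rw [mul_comm]
        · intro a b hab
          rw [hσD, map_pow, map_mul, aeval_X, aeval_X]
          simp only [Matrix.cons_val_zero, Matrix.cons_val_one, Matrix.head_cons]
          have hc : C (ζ ^ (-a)) * X 0 * (C (ζ ^ (-b)) * X 1)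
              = C (ζ ^ (-a) * ζ ^ (-b)) * ((X 0 : MvPolynomial (Fin 2) K) * X 1) := by
            rw [C_mul]; ring
          rw [hc, mul_pow, ← C_pow]
          have hone : (ζ ^ (-a) * ζ ^ (-b)) ^ d = 1 := by
            rw [← zpow_add₀ hζ0]
            have h1 : (ζ ^ (-a + -b)) ^ d = ζ ^ ((-a + -b) * d) := by
              rw [← zpow_natCast (ζ ^ (-a + -b)) d, ← zpow_mul]
            rw [h1]
            apply hζpow
            obtain ⟨c, hc'⟩ := hab
            refine ⟨-c, ?_⟩
            rw [hm]
            push_cast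
            rw [show (-a + -b : ℤ) = -(a + b) by ring, hc']
            ring
          rw [hone, C_1, one_mul]
      · refine hmemiff _ (hinv_gen _ ?_ ?_)
        · rw [hστ, map_add, map_pow, map_pow, rename_X, rename_X]
          simp only [Equiv.swap_apply_left, Equiv.swap_apply_right]
          rw [add_comm]
        · intro a b hab
          rw [hσD, map_add, map_pow, map_pow, aeval_X, aeval_X]
          simp only [Matrix.cons_val_zero, Matrix.cons_val_one, Matrix.head_cons]
          rw [mul_pow, mul_pow, ← C_pow, ← C_pow]
          have h1 : (ζ ^ (-a)) ^ m = 1 := by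
            rw [← zpow_natCast (ζ ^ (-a)) m, ← zpow_mul]
            exact hζpow _ ⟨-a, by ring⟩
          have h2 : (ζ ^ (-b)) ^ m = 1 := by
            rw [← zpow_natCast (ζ ^ (-b)) m, ← zpow_mul]
            exact hζpow _ ⟨-b, by ring⟩
          rw [h1, h2, C_1, one_mul, one_mul]
  · exact alg_indep_aux m d hd hm0
end

section
/- Let G = G(m,e,2), m = de, and write ρ(x^a y^b) = Ind_H^G χ_H(x^a y^b). For every λ ∈ {1,…,e−1} and a,b ∈ {0,…,d−1}, there is an isomorphism of G-representations ρ(x^{λd+a} y^b) ≅ ρ(x^{(e−λ)d+b} y^a). -/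
/-!
STATEMENT 11: for `G = G(m,e,2)` with `m = de`, for `λ ∈ {1,…,e-1}` and
`a, b ∈ {0,…,d-1}` there is an isomorphism of `G`-representations
`ρ(x^{λd+a} y^b) ≅ ρ(x^{(e-λ)d+b} y^a)`, where `ρ(x^α y^β) = Ind_H^G χ_H(x^α y^β)` is
realised on `K²` by `D(a',b') ↦ diag(ζ^{αa'+βb'}, ζ^{αb'+βa'})` and `τ ↦ (swap)`.
-/
theorem rho_iso_Gme2
    {K : Type*} [Field K] (m d e : ℕ) (hd : 0 < d) (he : 0 < e)
    (hm : m = d * e)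
    (ζ : K) (hζ : IsPrimitiveRoot ζ m) (hζ0 : ζ ≠ 0)
    (lam a b : ℕ) (hlam : 1 ≤ lam) (hlam' : lam < e) (ha : a < d) (hb : b < d)
    (ρ₁ ρ₂ : Representation K ↥(Gme2 ζ hζ0 e) (Fin 2 → K))
    -- `ρ₁` is the model of `ρ(x^{λd+a} y^b)`
    (hρ₁D : ∀ (a' b' : ℤ) (h : (e : ℤ) ∣ a' + b') (w : Fin 2 → K),
      ρ₁ (DG ζ hζ0 e a' b' h) w =
        ![ζ ^ (((lam * d + a : ℕ) : ℤ) * a' + (b : ℤ) * b') * w 0,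
          ζ ^ (((lam * d + a : ℕ) : ℤ) * b' + (b : ℤ) * a') * w 1])
    (hρ₁τ : ∀ w : Fin 2 → K, ρ₁ (tauG ζ hζ0 e) w = ![w 1, w 0])
    -- `ρ₂` is the model of `ρ(x^{(e-λ)d+b} y^a)`
    (hρ₂D : ∀ (a' b' : ℤ) (h : (e : ℤ) ∣ a' + b') (w : Fin 2 → K),
      ρ₂ (DG ζ hζ0 e a' b' h) w =
        ![ζ ^ ((((e - lam) * d + b : ℕ) : ℤ) * a' + (a : ℤ) * b') * w 0,
          ζ ^ ((((e - lam) * d + b : ℕ) : ℤ) * b' + (a : ℤ) * a') * w 1])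
    (hρ₂τ : ∀ w : Fin 2 → K, ρ₂ (tauG ζ hζ0 e) w = ![w 1, w 0]) :
    ∃ T : (Fin 2 → K) ≃ₗ[K] (Fin 2 → K),
      ∀ (g : ↥(Gme2 ζ hζ0 e)) (w : Fin 2 → K), T (ρ₁ g w) = ρ₂ g (T w) := by
  -- the intertwiner is the coordinate swap
  classical
  refine ⟨{ toFun := fun w => ![w 1, w 0]
            invFun := fun w => ![w 1, w 0]
            map_add' := by
              intro u v; funext i; fin_cases i <;> simp
            map_smul' := by
              intro c v; funext i; fin_cases i <;> simp
            left_inv := by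
              intro w; funext i; fin_cases i <;> simp
            right_inv := by
              intro w; funext i; fin_cases i <;> simp }, ?_⟩
  -- key exponent identity
  have key : ∀ u v : ℤ, (e : ℤ) ∣ u + v →
      ζ ^ (((lam * d + a : ℕ) : ℤ) * v + (b : ℤ) * u) =
      ζ ^ (((((e - lam) * d + b : ℕ)) : ℤ) * u + (a : ℤ) * v) := by
    intro u v ⟨k, hk⟩
    have hv : v = (e : ℤ) * k - u := by linarith
    have hE : (((lam * d + a : ℕ) : ℤ) * v + (b : ℤ) * u) =
        (((((e - lam) * d + b : ℕ)) : ℤ) * u + (a : ℤ) * v)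
          + (m : ℤ) * ((lam : ℤ) * k - u) := by
      subst hv
      push_cast [hm, Nat.cast_sub hlam'.le]
      ring
    rw [hE, zpow_add₀ hζ0, zpow_mul]
    rw [show ((m : ℤ)) = ((m : ℕ) : ℤ) from rfl, zpow_natCast, hζ.pow_eq_one]
    simp
  intro g w
  -- prove the intertwining property by induction on the closure
  have main : ∀ (x : GL (Fin 2) K) (hx : x ∈ Gme2 ζ hζ0 e) (w : Fin 2 → K),
      ![(ρ₁ (⟨x, hx⟩ : ↥(Gme2 ζ hζ0 e)) w) 1, (ρ₁ ⟨x, hx⟩ w) 0] =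
        ρ₂ (⟨x, hx⟩ : ↥(Gme2 ζ hζ0 e)) ![w 1, w 0] := by
    intro x hx
    induction hx using Subgroup.closure_induction with
    | mem x hx =>
      rcases hx with h | ⟨a', b', hab, rfl⟩
      · subst h
        intro w
        have h1 : (⟨tauGL K, Subgroup.subset_closure (Set.mem_insert _ _)⟩ :
            ↥(Gme2 ζ hζ0 e)) = tauG ζ hζ0 e := rfl
        rw [h1, hρ₁τ, hρ₂τ]
      · intro w
        have h1 : (⟨Dgl ζ hζ0 a' b', _⟩ : ↥(Gme2 ζ hζ0 e)) = DG ζ hζ0 e a' b' hab := rfl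
        rw [h1, hρ₁D _ _ hab, hρ₂D _ _ hab]
        funext i
        fin_cases i <;>
          simp only [Matrix.cons_val_zero, Matrix.cons_val_one, Matrix.head_cons,
            Fin.isValue, Fin.zero_eta, Fin.mk_one]
        · exact congrArg (· * w 1) (key a' b' hab)
        · exact congrArg (· * w 0) (key b' a' (by rw [add_comm]; exact hab))
    | one =>
      intro w
      have h1 : (⟨(1 : GL (Fin 2) K), _⟩ : ↥(Gme2 ζ hζ0 e)) = 1 := rfl
      rw [h1]; simp
    | mul x y hxm hym ihx ihy =>
      intro w
      have h1 : (⟨x * y, _⟩ : ↥(Gme2 ζ hζ0 e)) =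
          (⟨x, hxm⟩ : ↥(Gme2 ζ hζ0 e)) * ⟨y, hym⟩ := rfl
      rw [h1, map_mul, map_mul]
      have := ihx (ρ₁ (⟨y, hym⟩ : ↥(Gme2 ζ hζ0 e)) w)
      simp only [Module.End.mul_apply] at *
      rw [this, ihy]
    | inv x hxm ihx =>
      intro w
      have h1 : (⟨x⁻¹, _⟩ : ↥(Gme2 ζ hζ0 e)) =
          (⟨x, hxm⟩ : ↥(Gme2 ζ hζ0 e))⁻¹ := rfl
      rw [h1]
      have h2 := ihx (ρ₁ ((⟨x, hxm⟩ : ↥(Gme2 ζ hζ0 e))⁻¹) w)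
      have h3 : ρ₁ (⟨x, hxm⟩ : ↥(Gme2 ζ hζ0 e))
          (ρ₁ ((⟨x, hxm⟩ : ↥(Gme2 ζ hζ0 e))⁻¹) w) = w := by
        rw [← Module.End.mul_apply, ← map_mul, mul_inv_cancel]; simp
      rw [h3] at h2
      have := congrArg (ρ₂ ((⟨x, hxm⟩ : ↥(Gme2 ζ hζ0 e))⁻¹)) h2
      rw [← Module.End.mul_apply, ← map_mul, inv_mul_cancel] at this
      simpa using this.symm
  simpa using main g.1 g.2 w
end

section
/- Let G = G(m,e,2), H its diagonal subgroup, and ρ(x^a y^b) = Ind_H^G χ_H(x^a y^b). For any a,b ≥ 0 and c ∈ {0,…,d−1}: (i) ρ(x^a y^b) ⊗ χ((xy)^c) ≅ ρ(x^{a+c} y^{b+c}) and ρ(x^a y^b) ⊗ χ(A(xy)^c) ≅ ρ(x^{a+c} y^{b+c}); (ii) ρ(x^a y^b) ⊗ ρ(x) ≅ ρ(x^{a+1} y^b) ⊕ ρ(x^a y^{b+1}). -/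
open TensorProduct

noncomputable section Aux

open TensorProduct

variable {K : Type*} [Field K]

/-- Intertwining relations propagate from generators to the whole closure. -/
private lemma intertwine_of_gen {G : Type*} [Group G] {H : Subgroup G} {s : Set G}
    (htop : Subgroup.closure (((↑) : ↥H → G) ⁻¹' s) = ⊤)
    {V W : Type*} [AddCommGroup V] [Module K V] [AddCommGroup W] [Module K W]
    (ρ : ↥H →* (V →ₗ[K] V)) (σ : ↥H →* (W →ₗ[K] W)) (T : V ≃ₗ[K] W)
    (hgen : ∀ g : ↥H, (g : G) ∈ s → ∀ v, T (ρ g v) = σ g (T v))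
    (g : ↥H) : ∀ v, T (ρ g v) = σ g (T v) := by
  let S : Subgroup ↥H :=
    { carrier := {h | ∀ v, T (ρ h v) = σ h (T v)}
      one_mem' := by intro v; simp
      mul_mem' := by
        intro x y hx hy
        simp only [Set.mem_setOf_eq] at *
        intro v
        simp only [map_mul, Module.End.mul_apply]
        rw [hx, hy]
      inv_mem' := by
        intro x hx
        simp only [Set.mem_setOf_eq] at *
        intro v
        have h2 : ρ x (ρ x⁻¹ v) = v := by
          rw [← Module.End.mul_apply, ← map_mul, mul_inv_cancel, map_one, Module.End.one_apply]
        have h1 := hx (ρ x⁻¹ v)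
        rw [h2] at h1
        rw [h1, ← Module.End.mul_apply, ← map_mul, inv_mul_cancel, map_one, Module.End.one_apply] }
  have hg : g ∈ Subgroup.closure (((↑) : ↥H → G) ⁻¹' s) := by
    rw [htop]; trivial
  exact (Subgroup.closure_le S).mpr (fun x hx => hgen ⟨x, x.2⟩ hx) hg

private lemma zpow_collect (ζ : K) (hζ0 : ζ ≠ 0) (x y : ℤ) (c : ℕ) :
    (ζ ^ x) ^ c * ζ ^ y = ζ ^ (x * c + y) := by
  rw [← zpow_natCast (ζ ^ x) c, ← zpow_mul, ← zpow_add₀ hζ0]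

/-- The sign-flip `w ↦ (w 0, -w 1)` as a linear map. -/
private def negSecondMap : (Fin 2 → K) →ₗ[K] (Fin 2 → K) where
  toFun w := ![w 0, -w 1]
  map_add' u v := by
    funext i
    fin_cases i <;> simp [Matrix.cons_val_zero, Matrix.cons_val_one, Matrix.head_cons] <;> ring
  map_smul' r w := by
    funext i
    fin_cases i <;> simp [Matrix.cons_val_zero, Matrix.cons_val_one, Matrix.head_cons] <;> ring

private lemma negSecondMap_apply (w : Fin 2 → K) : negSecondMap w = ![w 0, -w 1] := rfl

private lemma negSecond_invol : (negSecondMap : (Fin 2 → K) →ₗ[K] _) ∘ₗ negSecondMap = LinearMap.id := by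
  refine LinearMap.ext fun w => ?_
  funext i
  fin_cases i <;> simp [negSecondMap_apply]

/-- The sign-flip as a linear equivalence. -/
private def negSecond : (Fin 2 → K) ≃ₗ[K] (Fin 2 → K) :=
  LinearEquiv.ofLinear negSecondMap negSecondMap negSecond_invol negSecond_invol

private lemma negSecond_apply (w : Fin 2 → K) : negSecond w = ![w 0, -w 1] := rfl

/-- The bilinear map underlying the decomposition of the tensor square. -/
private def Bmap : (Fin 2 → K) →ₗ[K] (Fin 2 → K) →ₗ[K] ((Fin 2 → K) × (Fin 2 → K)) :=
  LinearMap.mk₂ K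
    (fun u v => (![u 0 * v 0, u 1 * v 1], ![u 0 * v 1, u 1 * v 0]))
    (by intro u u' v; refine Prod.ext ?_ ?_ <;> funext i <;> fin_cases i <;>
        simp <;> ring)
    (by intro r u v; refine Prod.ext ?_ ?_ <;> funext i <;> fin_cases i <;>
        simp <;> ring)
    (by intro u v v'; refine Prod.ext ?_ ?_ <;> funext i <;> fin_cases i <;>
        simp <;> ring)
    (by intro r u v; refine Prod.ext ?_ ?_ <;> funext i <;> fin_cases i <;>
        simp <;> ring)

private lemma Bmap_apply (u v : Fin 2 → K) :
    Bmap u v = ((![u 0 * v 0, u 1 * v 1], ![u 0 * v 1, u 1 * v 0]) :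
      (Fin 2 → K) × (Fin 2 → K)) := rfl

private def e₀ : Fin 2 → K := ![1, 0]
private def e₁ : Fin 2 → K := ![0, 1]

private lemma vec_expand (w : Fin 2 → K) : w = w 0 • e₀ + w 1 • e₁ := by
  funext i
  fin_cases i <;> simp [e₀, e₁]

/-- The inverse of the tensor decomposition map. -/
private def Smap : ((Fin 2 → K) × (Fin 2 → K)) →ₗ[K] ((Fin 2 → K) ⊗[K] (Fin 2 → K)) where
  toFun p := p.1 0 • (e₀ ⊗ₜ[K] e₀) + p.1 1 • (e₁ ⊗ₜ[K] e₁)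
      + p.2 0 • (e₀ ⊗ₜ[K] e₁) + p.2 1 • (e₁ ⊗ₜ[K] e₀)
  map_add' p q := by
    simp only [Prod.fst_add, Prod.snd_add, Pi.add_apply, add_smul]
    module
  map_smul' r p := by
    simp only [Prod.smul_fst, Prod.smul_snd, Pi.smul_apply, smul_eq_mul, RingHom.id_apply,
      mul_smul]
    module

private def Ttensor : ((Fin 2 → K) ⊗[K] (Fin 2 → K)) ≃ₗ[K] ((Fin 2 → K) × (Fin 2 → K)) :=
  LinearEquiv.ofLinear (TensorProduct.lift Bmap) Smap
    (by
      refine LinearMap.ext fun p => ?_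
      simp only [LinearMap.comp_apply, Smap, LinearMap.coe_mk, AddHom.coe_mk, map_add, map_smul,
        TensorProduct.lift.tmul, Bmap_apply, LinearMap.id_apply]
      refine Prod.ext ?_ ?_ <;> funext i <;> fin_cases i <;>
        simp [e₀, e₁, Prod.fst_add, Prod.snd_add])
    (by
      refine TensorProduct.ext' fun u v => ?_
      simp only [LinearMap.comp_apply, TensorProduct.lift.tmul, Bmap_apply, Smap,
        LinearMap.coe_mk, AddHom.coe_mk, LinearMap.id_apply]
      simp only [Matrix.cons_val_zero, Matrix.cons_val_one, Matrix.head_cons]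
      conv_rhs => rw [vec_expand u, vec_expand v]
      simp only [TensorProduct.add_tmul, TensorProduct.tmul_add, TensorProduct.smul_tmul,
        TensorProduct.tmul_smul, smul_smul]
      module)

private lemma Ttensor_tmul (u v : Fin 2 → K) :
    Ttensor (u ⊗ₜ[K] v) = ((![u 0 * v 0, u 1 * v 1], ![u 0 * v 1, u 1 * v 0]) :
      (Fin 2 → K) × (Fin 2 → K)) := by
  simp [Ttensor, Bmap_apply]

/-- Twist a representation by a linear character. -/
private def twist {G : Type*} [Group G] {V : Type*} [AddCommGroup V] [Module K V]
    (f : G →* Kˣ) (ρ : G →* (V →ₗ[K] V)) : G →* (V →ₗ[K] V) where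
  toFun g := ((f g : Kˣ) : K) • ρ g
  map_one' := by simp
  map_mul' g h := by
    refine LinearMap.ext fun v => ?_
    simp only [map_mul, Units.val_mul, Module.End.mul_apply, LinearMap.smul_apply,
      map_smul, mul_smul]
    rw [smul_comm]

/-- The direct sum (product) of two representations. -/
private def prodRep {G : Type*} [Group G] {V W : Type*} [AddCommGroup V] [Module K V]
    [AddCommGroup W] [Module K W]
    (ρ1 : G →* (V →ₗ[K] V)) (ρ2 : G →* (W →ₗ[K] W)) : G →* ((V × W) →ₗ[K] (V × W)) where
  toFun g := (ρ1 g).prodMap (ρ2 g)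
  map_one' := by
    refine LinearMap.ext fun p => ?_
    simp [LinearMap.prodMap_apply]
  map_mul' g h := by
    refine LinearMap.ext fun p => ?_
    simp [LinearMap.prodMap_apply, Module.End.mul_apply, map_mul]

private lemma comp_eq (ζ : K) (hζ0 : ζ ≠ 0) {x y z : ℤ} (h : x + y = z) (s t : K) :
    ζ ^ x * s * (ζ ^ y * t) = ζ ^ z * (s * t) := by
  rw [← h, zpow_add₀ hζ0]; ring

private lemma comp_eq' (ζ : K) (hζ0 : ζ ≠ 0) {x y z : ℤ} {c : ℕ} (h : x * c + y = z) (t : K) :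
    (ζ ^ x) ^ c * (ζ ^ y * t) = ζ ^ z * t := by
  rw [← h, zpow_add₀ hζ0, zpow_mul, zpow_natCast, mul_assoc]

end Aux

/-!
STATEMENT 15: tensor product decompositions for `G = G(m,e,2)`.
With `ρ(x^α y^β)` realised by the standard induced model `P α β` on `K²`,
`χ(xy) : D(a,b) ↦ ζ^{a+b}, τ ↦ 1` and `χ(A) : D(a,b) ↦ 1, τ ↦ -1`:
(i) `ρ(x^a y^b) ⊗ χ((xy)^c) ≅ ρ(x^{a+c} y^{b+c})` and
    `ρ(x^a y^b) ⊗ χ(A(xy)^c) ≅ ρ(x^{a+c} y^{b+c})` for `0 ≤ c < d`;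
(ii) `ρ(x^a y^b) ⊗ ρ(x) ≅ ρ(x^{a+1} y^b) ⊕ ρ(x^a y^{b+1})`.
-/
theorem tensor_decompositions_Gme2
    {K : Type*} [Field K] (m d e : ℕ) (hd : 0 < d) (he : 0 < e)
    (hm : m = d * e)
    (ζ : K) (hζ : IsPrimitiveRoot ζ m) (hζ0 : ζ ≠ 0)
    (χxy χA : ↥(Gme2 ζ hζ0 e) →* Kˣ)
    (hχxyD : ∀ (a b : ℤ) (h : (e : ℤ) ∣ a + b),
      ((χxy (DG ζ hζ0 e a b h) : Kˣ) : K) = ζ ^ (a + b))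
    (hχxyτ : χxy (tauG ζ hζ0 e) = 1)
    (hχAD : ∀ (a b : ℤ) (h : (e : ℤ) ∣ a + b), χA (DG ζ hζ0 e a b h) = 1)
    (hχAτ : ((χA (tauG ζ hζ0 e) : Kˣ) : K) = -1)
    -- the standard model `P α β` of `ρ(x^α y^β) = Ind_H^G χ_H(x^α y^β)`
    (P : ℤ → ℤ → Representation K ↥(Gme2 ζ hζ0 e) (Fin 2 → K))
    (hPD : ∀ (α β a' b' : ℤ) (h : (e : ℤ) ∣ a' + b') (w : Fin 2 → K),
      P α β (DG ζ hζ0 e a' b' h) w =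
        ![ζ ^ (α * a' + β * b') * w 0, ζ ^ (α * b' + β * a') * w 1])
    (hPτ : ∀ (α β : ℤ) (w : Fin 2 → K), P α β (tauG ζ hζ0 e) w = ![w 1, w 0])
    (a b : ℕ) (c : ℕ) (hc : c < d) :
    -- (i) twisting by `χ((xy)^c)` and by `χ(A(xy)^c)`
    (∃ T : (Fin 2 → K) ≃ₗ[K] (Fin 2 → K),
      ∀ (g : ↥(Gme2 ζ hζ0 e)) (w : Fin 2 → K),
        T ((((χxy g : Kˣ) : K) ^ c) • P (a : ℤ) (b : ℤ) g w) =
          P ((a : ℤ) + c) ((b : ℤ) + c) g (T w)) ∧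
    (∃ T : (Fin 2 → K) ≃ₗ[K] (Fin 2 → K),
      ∀ (g : ↥(Gme2 ζ hζ0 e)) (w : Fin 2 → K),
        T ((((χA g : Kˣ) : K) * ((χxy g : Kˣ) : K) ^ c) • P (a : ℤ) (b : ℤ) g w) =
          P ((a : ℤ) + c) ((b : ℤ) + c) g (T w)) ∧
    -- (ii) tensoring with `ρ(x)`
    (∃ T : ((Fin 2 → K) ⊗[K] (Fin 2 → K)) ≃ₗ[K] ((Fin 2 → K) × (Fin 2 → K)),
      ∀ (g : ↥(Gme2 ζ hζ0 e)) (u u' : Fin 2 → K),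
        T (P (a : ℤ) (b : ℤ) g u ⊗ₜ[K] P 1 0 g u') =
          (P ((a : ℤ) + 1) (b : ℤ) g ((T (u ⊗ₜ[K] u')).1),
           P (a : ℤ) ((b : ℤ) + 1) g ((T (u ⊗ₜ[K] u')).2))) := by
  classical
  have htop : Subgroup.closure
      (((↑) : ↥(Gme2 ζ hζ0 e) → GL (Fin 2) K) ⁻¹'
        (insert (tauGL K) {A | ∃ a b : ℤ, (e : ℤ) ∣ a + b ∧ A = Dgl ζ hζ0 a b})) = ⊤ :=
    Subgroup.closure_closure_coe_preimage
  have hcases : ∀ g : ↥(Gme2 ζ hζ0 e),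
      (g : GL (Fin 2) K) ∈
        insert (tauGL K) {A | ∃ a b : ℤ, (e : ℤ) ∣ a + b ∧ A = Dgl ζ hζ0 a b} →
      g = tauG ζ hζ0 e ∨ ∃ a' b' h, g = DG ζ hζ0 e a' b' h := by
    intro g hg
    rw [Set.mem_insert_iff] at hg
    rcases hg with h | ⟨a', b', hab, hA⟩
    · exact Or.inl (Subtype.ext h)
    · exact Or.inr ⟨a', b', hab, Subtype.ext hA⟩
  refine ⟨⟨LinearEquiv.refl K _, ?_⟩, ⟨negSecond, ?_⟩, ⟨Ttensor, ?_⟩⟩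
  · -- (i) first twist
    have key : ∀ g w, (LinearEquiv.refl K (Fin 2 → K)) ((twist (χxy ^ c) (P (a : ℤ) (b : ℤ))) g w)
        = (P ((a : ℤ) + c) ((b : ℤ) + c)) g ((LinearEquiv.refl K (Fin 2 → K)) w) := by
      refine intertwine_of_gen htop _ _ _ ?_
      intro g hg w
      rcases hcases g hg with rfl | ⟨a', b', h, rfl⟩
      · simp only [twist, MonoidHom.coe_mk, OneHom.coe_mk, MonoidHom.pow_apply, hχxyτ,
          one_pow, Units.val_one, LinearMap.smul_apply, one_smul, LinearEquiv.refl_apply]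
        rw [hPτ, hPτ]
      · simp only [twist, MonoidHom.coe_mk, OneHom.coe_mk, MonoidHom.pow_apply,
          Units.val_pow_eq_pow_val, hχxyD, LinearMap.smul_apply, LinearEquiv.refl_apply]
        rw [hPD, hPD]
        funext i
        fin_cases i <;>
          simp only [Pi.smul_apply, Matrix.cons_val_zero, Matrix.cons_val_one,
            Matrix.head_cons, smul_eq_mul, Fin.isValue] <;>
          exact comp_eq' ζ hζ0 (by push_cast; ring) _
    intro g w
    simpa [twist, MonoidHom.pow_apply, Units.val_pow_eq_pow_val] using key g w
  · -- (i) second twist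
    have key : ∀ g w, (negSecond : (Fin 2 → K) ≃ₗ[K] _)
          ((twist (χA * χxy ^ c) (P (a : ℤ) (b : ℤ))) g w)
        = (P ((a : ℤ) + c) ((b : ℤ) + c)) g (negSecond w) := by
      refine intertwine_of_gen htop _ _ _ ?_
      intro g hg w
      rcases hcases g hg with rfl | ⟨a', b', h, rfl⟩
      · simp only [twist, MonoidHom.coe_mk, OneHom.coe_mk, MonoidHom.mul_apply,
          MonoidHom.pow_apply, Units.val_mul, Units.val_pow_eq_pow_val, hχxyτ,
          Units.val_one, one_pow, mul_one, LinearMap.smul_apply]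
        rw [hPτ, hPτ, negSecond_apply]
        funext i
        fin_cases i <;>
          simp [negSecond_apply, hχAτ]
      · simp only [twist, MonoidHom.coe_mk, OneHom.coe_mk, MonoidHom.mul_apply,
          MonoidHom.pow_apply, Units.val_mul, Units.val_pow_eq_pow_val, hχAD, hχxyD,
          Units.val_one, one_mul, LinearMap.smul_apply]
        rw [hPD, hPD, negSecond_apply]
        funext i
        fin_cases i <;>
          simp only [negSecond_apply, Pi.smul_apply, Matrix.cons_val_zero,
            Matrix.cons_val_one, Matrix.head_cons, smul_eq_mul, Fin.isValue, Fin.mk_zero,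
            Fin.mk_one, mul_neg, neg_inj] <;>
          exact comp_eq' ζ hζ0 (by push_cast; ring) _
    intro g w
    simpa [twist, MonoidHom.mul_apply, MonoidHom.pow_apply, Units.val_mul,
      Units.val_pow_eq_pow_val] using key g w
  · -- (ii)
    have key : ∀ g v, (Ttensor : ((Fin 2 → K) ⊗[K] (Fin 2 → K)) ≃ₗ[K] _)
          (((P (a : ℤ) (b : ℤ)).tprod (P 1 0)) g v)
        = (prodRep (P ((a : ℤ) + 1) (b : ℤ)) (P (a : ℤ) ((b : ℤ) + 1))) g (Ttensor v) := by
      refine intertwine_of_gen htop _ _ _ ?_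
      intro g hg
      suffices hsuff : (Ttensor.toLinearMap ∘ₗ ((P (a : ℤ) (b : ℤ)).tprod (P 1 0)) g) =
          ((prodRep (P ((a : ℤ) + 1) (b : ℤ)) (P (a : ℤ) ((b : ℤ) + 1))) g ∘ₗ
            Ttensor.toLinearMap) by
        intro v
        simpa using LinearMap.congr_fun hsuff v
      refine TensorProduct.ext' fun u v => ?_
      simp only [LinearMap.comp_apply, Representation.tprod_apply, TensorProduct.map_tmul,
        LinearEquiv.coe_coe]
      rcases hcases g hg with rfl | ⟨a', b', h, rfl⟩
      · rw [hPτ, hPτ, Ttensor_tmul, Ttensor_tmul]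
        refine Prod.ext ?_ ?_ <;> funext i <;> fin_cases i <;>
          simp [prodRep, LinearMap.prodMap_apply, hPτ, mul_comm]
      · rw [hPD, hPD, Ttensor_tmul, Ttensor_tmul]
        refine Prod.ext ?_ ?_ <;> funext i <;> fin_cases i <;>
          (simp only [prodRep, MonoidHom.coe_mk, OneHom.coe_mk, LinearMap.prodMap_apply,
            hPD, Matrix.cons_val_zero, Matrix.cons_val_one, Matrix.head_cons, Fin.isValue];
           exact comp_eq ζ hζ0 (by push_cast; ring) _ _)
    intro g u u'
    have := key g (u ⊗ₜ[K] u')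
    simp only [Representation.tprod_apply, TensorProduct.map_tmul, prodRep,
      MonoidHom.coe_mk, OneHom.coe_mk, LinearMap.prodMap_apply] at this
    exact this
end
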